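/- Let φ : ℝ → ℝ be convex and differentiable with Lipschitz derivative: |φ'(u) − φ'(v)| ≤ L*|u−v|. Let ρ be a probability measure on Z = X × {−1,1} and let f_ρ^φ be the pointwise minimizer of the conditional φ-risk, so that ∫_Z y(f(x) − f_ρ^φ(x)) φ'(y f_ρ^φ(x)) dρ = 0 for all bounded measurable f. Then for any bounded measurable f, E^φ(f) − E^φ(f_ρ^φ) ≤ L* · ‖f − f_ρ^φ‖²_{L²(ρ_X)}. -/

import Mathlib

/-!
Pointwise, the descent lemma for a loss with `L`-Lipschitz derivative, together with
`y ^ 2 = 1`, bounds `φ (y f) - φ (y fρ)` by the linear term `y (f - fρ) φ' (y fρ)` plus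
`L / 2 * (f - fρ) ^ 2`. Integrating over `ρ`, the linear term vanishes by the first-order
optimality of `fρ`, and the quadratic term is an integral over the marginal `ρ_X`.
-/

open MeasureTheory

/-- The descent lemma. -/
theorem sub_sub_deriv_mul_le_of_abs_deriv_sub_le {φ : ℝ → ℝ} {L : ℝ}
    (hdiff : Differentiable ℝ φ)
    (hLip : ∀ u v : ℝ, |deriv φ u - deriv φ v| ≤ L * |u - v|) (a b : ℝ) :
    φ a - φ b - deriv φ b * (a - b) ≤ L / 2 * (a - b) ^ 2 := by
  set h : ℝ → ℝ := fun x ↦ φ x - φ b - deriv φ b * (x - b) - L / 2 * (x - b) ^ 2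
  have hh : ∀ x, HasDerivAt h (deriv φ x - deriv φ b - L * (x - b)) x := fun x ↦ by
    refine ((((hdiff x).hasDerivAt.sub_const (φ b)).sub
      (((hasDerivAt_id' x).sub_const b).const_mul (deriv φ b))).sub
      ((((hasDerivAt_id' x).sub_const b).pow 2).const_mul (L / 2))).congr_deriv ?_
    ring
  have hdiffh : Differentiable ℝ h := fun x ↦ (hh x).differentiableAt
  -- `h` peaks at `b`: it is antitone on `[b, ∞)` and monotone on `(-∞, b]`.
  suffices h a ≤ h b by simpa [h] using this
  rcases le_total b a with hba | hab
  · refine antitoneOn_of_deriv_nonpos (convex_Ici b) hdiffh.continuous.continuousOn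
      hdiffh.differentiableOn (fun x hx ↦ ?_) Set.self_mem_Ici hba hba
    rw [interior_Ici, Set.mem_Ioi] at hx
    have hxb := (le_abs_self _).trans (hLip x b)
    rw [abs_of_pos (sub_pos.2 hx)] at hxb
    rw [(hh x).deriv]
    linarith
  · refine monotoneOn_of_deriv_nonneg (convex_Iic b) hdiffh.continuous.continuousOn
      hdiffh.differentiableOn (fun x hx ↦ ?_) hab Set.self_mem_Iic hab
    rw [interior_Iic, Set.mem_Iio] at hx
    have hxb := (neg_abs_le _).trans' (neg_le_neg (hLip x b))
    rw [abs_of_neg (sub_neg.2 hx)] at hxb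
    rw [(hh x).deriv]
    linarith

theorem MeasureTheory.Integrable.continuous_comp_of_ae_abs_le {Z : Type*} [MeasurableSpace Z]
    {μ : Measure Z} [IsFiniteMeasure μ] {ψ : ℝ → ℝ} (hψ : Continuous ψ) {g : Z → ℝ}
    (hg : AEStronglyMeasurable g μ) {B : ℝ} (hB : ∀ᵐ z ∂μ, |g z| ≤ B) :
    Integrable (fun z ↦ ψ (g z)) μ := by
  obtain ⟨M, hM⟩ :=
    (isCompact_Icc (a := -B) (b := B)).exists_bound_of_continuousOn hψ.continuousOn
  refine Integrable.of_bound (hψ.comp_aestronglyMeasurable hg) M ?_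
  filter_upwards [hB] with z hz using hM _ (abs_le.1 hz)

theorem sub_le_mul_mul_deriv_add_of_sq_eq_one {φ : ℝ → ℝ} {L : ℝ}
    (hdiff : Differentiable ℝ φ) (hLip : ∀ u v : ℝ, |deriv φ u - deriv φ v| ≤ L * |u - v|)
    {y : ℝ} (hy : y ^ 2 = 1) (s t : ℝ) :
    φ (y * s) - φ (y * t) ≤ y * (s - t) * deriv φ (y * t) + L / 2 * (s - t) ^ 2 := by
  have := sub_sub_deriv_mul_le_of_abs_deriv_sub_le hdiff hLip (y * s) (y * t)
  rw [← mul_sub, mul_pow, hy, one_mul] at this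
  linarith

theorem ae_abs_snd_mul_le_of_abs_le {X : Type*} [MeasurableSpace X] {μ : Measure (X × ℝ)}
    (hy : ∀ᵐ z ∂μ, z.2 = 1 ∨ z.2 = -1) {g : X → ℝ} {B : ℝ} (hg : ∀ x, |g x| ≤ B) :
    ∀ᵐ z ∂μ, |z.2 * g z.1| ≤ B := by
  filter_upwards [hy] with z hz
  rcases hz with h | h <;> simpa [h] using hg z.1

theorem smooth_loss_excess_risk_le_general
    {X : Type*} [MeasurableSpace X]
    (φ : ℝ → ℝ) (L : ℝ)
    (hdiff : Differentiable ℝ φ)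
    (hLip : ∀ u v : ℝ, |deriv φ u - deriv φ v| ≤ L * |u - v|)
    (ρ : Measure (X × ℝ)) [IsProbabilityMeasure ρ]
    (hy : ∀ᵐ z ∂ρ, z.2 = 1 ∨ z.2 = -1)
    (fρ : X → ℝ) (hfρm : Measurable fρ) (hfρb : ∃ B, ∀ x, |fρ x| ≤ B)
    (horth : ∀ f : X → ℝ, Measurable f → (∃ B, ∀ x, |f x| ≤ B) →
      ∫ z, z.2 * (f z.1 - fρ z.1) * deriv φ (z.2 * fρ z.1) ∂ρ = 0)
    (f : X → ℝ) (hfm : Measurable f) (hfb : ∃ B, ∀ x, |f x| ≤ B) :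
    (∫ z, φ (z.2 * f z.1) ∂ρ) - (∫ z, φ (z.2 * fρ z.1) ∂ρ) ≤
      L * ∫ x, (f x - fρ x) ^ 2 ∂(ρ.map Prod.fst) := by
  obtain ⟨Bf, hBf⟩ := hfb
  obtain ⟨Bρ, hBρ⟩ := hfρb
  have hL : 0 ≤ L := by simpa using (abs_nonneg _).trans (hLip 0 1)
  have hφ' : Continuous (deriv φ) :=
    (LipschitzWith.of_dist_le' (K := L) fun u v ↦ by
      simpa only [Real.dist_eq] using hLip u v).continuous
  have hBsub : ∀ x, |f x - fρ x| ≤ Bf + Bρ := fun x ↦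
    (abs_sub _ _).trans (add_le_add (hBf x) (hBρ x))
  have hint_f : Integrable (fun z ↦ φ (z.2 * f z.1)) ρ := .continuous_comp_of_ae_abs_le
    hdiff.continuous (by fun_prop) (ae_abs_snd_mul_le_of_abs_le hy hBf)
  have hint_fρ : Integrable (fun z ↦ φ (z.2 * fρ z.1)) ρ := .continuous_comp_of_ae_abs_le
    hdiff.continuous (by fun_prop) (ae_abs_snd_mul_le_of_abs_le hy hBρ)
  have hint_lin : Integrable (fun z ↦ z.2 * (f z.1 - fρ z.1) * deriv φ (z.2 * fρ z.1)) ρ :=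
    (Integrable.continuous_comp_of_ae_abs_le hφ' (by fun_prop)
      (ae_abs_snd_mul_le_of_abs_le hy hBρ)).bdd_mul (by fun_prop)
      (ae_abs_snd_mul_le_of_abs_le hy hBsub)
  have hint_sq : Integrable (fun z ↦ (f z.1 - fρ z.1) ^ 2) ρ := .continuous_comp_of_ae_abs_le
    (continuous_pow 2) (by fun_prop) (.of_forall fun z ↦ hBsub z.1)
  have hpt : ∀ᵐ z ∂ρ, φ (z.2 * f z.1) - φ (z.2 * fρ z.1) ≤
      z.2 * (f z.1 - fρ z.1) * deriv φ (z.2 * fρ z.1) + L / 2 * (f z.1 - fρ z.1) ^ 2 := by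
    filter_upwards [hy] with z hz
    have hz2 : z.2 ^ 2 = 1 := by rcases hz with h | h <;> simp [h]
    exact sub_le_mul_mul_deriv_add_of_sq_eq_one hdiff hLip hz2 _ _
  calc (∫ z, φ (z.2 * f z.1) ∂ρ) - (∫ z, φ (z.2 * fρ z.1) ∂ρ)
      ≤ ∫ z, (z.2 * (f z.1 - fρ z.1) * deriv φ (z.2 * fρ z.1)
          + L / 2 * (f z.1 - fρ z.1) ^ 2) ∂ρ := by
        rw [← integral_sub hint_f hint_fρ]
        exact integral_mono_ae (hint_f.sub hint_fρ) (hint_lin.add (hint_sq.const_mul _)) hpt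
    _ = L / 2 * ∫ x, (f x - fρ x) ^ 2 ∂(ρ.map Prod.fst) := by
        rw [integral_add hint_lin (hint_sq.const_mul _), horth f hfm ⟨Bf, hBf⟩, zero_add,
          integral_const_mul, integral_map measurable_fst.aemeasurable (by fun_prop)]
    _ ≤ L * ∫ x, (f x - fρ x) ^ 2 ∂(ρ.map Prod.fst) :=
        mul_le_mul_of_nonneg_right (by linarith) (integral_nonneg fun x ↦ sq_nonneg _)

theorem smooth_loss_excess_risk_le
    {X : Type*} [MeasurableSpace X]
    (φ : ℝ → ℝ) (L : ℝ)
    (hconv : ConvexOn ℝ Set.univ φ)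
    (hdiff : Differentiable ℝ φ)
    (hLip : ∀ u v : ℝ, |deriv φ u - deriv φ v| ≤ L * |u - v|)
    (ρ : Measure (X × ℝ)) [IsProbabilityMeasure ρ]
    (hy : ∀ᵐ z ∂ρ, z.2 = 1 ∨ z.2 = -1)
    (fρ : X → ℝ) (hfρm : Measurable fρ) (hfρb : ∃ B, ∀ x, |fρ x| ≤ B)
    (horth : ∀ f : X → ℝ, Measurable f → (∃ B, ∀ x, |f x| ≤ B) →
      ∫ z, z.2 * (f z.1 - fρ z.1) * deriv φ (z.2 * fρ z.1) ∂ρ = 0)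
    (f : X → ℝ) (hfm : Measurable f) (hfb : ∃ B, ∀ x, |f x| ≤ B) :
    (∫ z, φ (z.2 * f z.1) ∂ρ) - (∫ z, φ (z.2 * fρ z.1) ∂ρ) ≤
      L * ∫ x, (f x - fρ x) ^ 2 ∂(ρ.map Prod.fst) :=
  smooth_loss_excess_risk_le_general φ L hdiff hLip ρ hy fρ hfρm hfρb horth f hfm hfb
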